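/- arXiv:2009.03772 — 2 statements merged into one kernel-verified Lean document; each statement's English description precedes it below -/
import Mathlib

section
/- Let Λ = O[[X]] and let B ⊂ Λ be the maximal ideal of Λ. Then B/ϖB ≅ Ω ⊕ κ as Ω-modules, where Ω = Λ/(ϖ) and κ is the residue field of O. -/
/-!
The maximal ideal of `O⟦X⟧` is `(X, ϖ)`, and `X, ϖ` is a regular sequence. Every element of
`(X, ϖ)` can be written as `X g + ϖ h`; regularity makes `g mod ϖ` and `h mod (X, ϖ)` well
defined on `(X, ϖ) / ϖ (X, ϖ)`, and this identifies it with `O⟦X⟧ / (ϖ) × O⟦X⟧ / (X, ϖ)`.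
-/

open PowerSeries

noncomputable def LinearEquiv.ofSurjectiveOfKerEq {R M N P : Type*} [Ring R] [AddCommGroup M]
    [AddCommGroup N] [AddCommGroup P] [Module R M] [Module R N] [Module R P]
    (f : M →ₗ[R] N) (g : M →ₗ[R] P) (hf : Function.Surjective f) (hg : Function.Surjective g)
    (h : LinearMap.ker f = LinearMap.ker g) : N ≃ₗ[R] P :=
  (f.quotKerEquivOfSurjective hf).symm ≪≫ₗ Submodule.quotEquivOfEq _ _ h ≪≫ₗ
    g.quotKerEquivOfSurjective hg

namespace Ideal

variable {R : Type*} [CommRing R] (x y : R)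

def spanPairCover : R × R →ₗ[R] span {x, y} :=
  LinearMap.codRestrict _
    ((LinearMap.toSpanSingleton R R x).coprod (LinearMap.toSpanSingleton R R y))
    fun p => mem_span_pair.2 ⟨p.1, p.2, rfl⟩

theorem spanPairCover_surjective : Function.Surjective (spanPairCover x y) := by
  rintro ⟨z, hz⟩
  obtain ⟨a, b, rfl⟩ := mem_span_pair.1 hz
  exact ⟨(a, b), rfl⟩

variable {x y}

theorem mem_span_singleton_and_mem_span_pair_of_isSMulRegular (hx : IsSMulRegular R x)
    (hy : IsSMulRegular (R ⧸ span {x}) y) {a b : R}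
    (hab : a * x + b * y ∈ span {y} * span {x, y}) :
    a ∈ span {y} ∧ b ∈ span {x, y} := by
  obtain ⟨z, hz, hyz⟩ := mem_span_singleton_mul.1 hab
  obtain ⟨c, d, rfl⟩ := mem_span_pair.1 hz
  have hb : y * (d * y - b) = x * (a - c * y) := by linear_combination hyz
  have hdb : d * y - b ∈ span {x} := by
    rw [← Quotient.eq_zero_iff_mem]
    refine hy (show y • _ = y • 0 from ?_)
    rw [smul_zero, Algebra.smul_def, Quotient.algebraMap_eq, ← map_mul, hb,
      Quotient.eq_zero_iff_mem]
    exact mul_mem_right _ _ (mem_span_singleton_self x)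
  obtain ⟨e, he⟩ := mem_span_singleton'.1 hdb
  refine ⟨mem_span_singleton'.2 ⟨c + e, hx ?_⟩,
    mem_span_pair.2 ⟨-e, d, by linear_combination -he⟩⟩
  simp only [smul_eq_mul]
  linear_combination y * he + hb

theorem ker_mkQ_comp_spanPairCover (hx : IsSMulRegular R x)
    (hy : IsSMulRegular (R ⧸ span {x}) y) :
    LinearMap.ker ((span {y} • ⊤ : Submodule R (span {x, y})).mkQ ∘ₗ spanPairCover x y) =
      Submodule.prod (span {y}) (span {x, y}) := by
  ext ⟨a, b⟩
  simp only [LinearMap.mem_ker, LinearMap.comp_apply, Submodule.mkQ_apply,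
    Submodule.Quotient.mk_eq_zero, Submodule.mem_smul_top_iff, smul_eq_mul, Submodule.mem_prod]
  refine ⟨mem_span_singleton_and_mem_span_pair_of_isSMulRegular hx hy, fun ⟨ha, hb⟩ => ?_⟩
  obtain ⟨c, rfl⟩ := mem_span_singleton'.1 ha
  exact mem_span_singleton_mul.2 ⟨c * x + b,
    add_mem (mul_mem_left _ _ (subset_span (by simp))) hb, by simp [spanPairCover]; ring⟩

noncomputable def quotientSpanSingletonSMulTopEquiv (hx : IsSMulRegular R x)
    (hy : IsSMulRegular (R ⧸ span {x}) y) :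
    (span {x, y} ⧸ (span {y} • ⊤ : Submodule R (span {x, y}))) ≃ₗ[R]
      (R ⧸ span {y}) × (R ⧸ span {x, y}) :=
  LinearEquiv.ofSurjectiveOfKerEq
    ((span {y} • ⊤ : Submodule R (span {x, y})).mkQ ∘ₗ spanPairCover x y)
    ((span {y}).mkQ.prodMap (span {x, y}).mkQ)
    ((Submodule.mkQ_surjective _).comp (spanPairCover_surjective x y))
    (Prod.map_surjective.2 ⟨Submodule.mkQ_surjective _, Submodule.mkQ_surjective _⟩)
    (by rw [ker_mkQ_comp_spanPairCover hx hy, LinearMap.ker_prodMap, Submodule.ker_mkQ,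
      Submodule.ker_mkQ])

end Ideal

namespace PowerSeries

variable {O : Type*} [CommRing O]

theorem isSMulRegular_X : IsSMulRegular O⟦X⟧ (X : O⟦X⟧) :=
  X_mul_injective

theorem isSMulRegular_C_quotient_span_X {a : O} (ha : IsSMulRegular O a) :
    IsSMulRegular (O⟦X⟧ ⧸ Ideal.span {(X : O⟦X⟧)}) (C a) := by
  intro p q hpq
  obtain ⟨f, rfl⟩ := Ideal.Quotient.mk_surjective p
  obtain ⟨g, rfl⟩ := Ideal.Quotient.mk_surjective q
  replace hpq : Ideal.Quotient.mk _ (C a * f) = Ideal.Quotient.mk _ (C a * g) := hpq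
  rw [Ideal.Quotient.eq, Ideal.mem_span_singleton, X_dvd_iff, ← mul_sub, map_mul,
    constantCoeff_C, map_sub, mul_sub, sub_eq_zero] at hpq
  rw [Ideal.Quotient.eq, Ideal.mem_span_singleton, X_dvd_iff, map_sub, sub_eq_zero]
  exact ha hpq

theorem maximalIdeal_eq_comap_constantCoeff [IsLocalRing O] :
    IsLocalRing.maximalIdeal O⟦X⟧ = (IsLocalRing.maximalIdeal O).comap constantCoeff := by
  ext f
  simp [IsLocalRing.mem_maximalIdeal, mem_nonunits_iff, isUnit_iff_constantCoeff]

theorem comap_constantCoeff_span_singleton (a : O) :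
    (Ideal.span {a}).comap constantCoeff = Ideal.span {X, C a} := by
  have hker : Ideal.comap constantCoeff ⊥ = Ideal.span {(X : O⟦X⟧)} := by
    ext f
    simp [Ideal.mem_span_singleton, X_dvd_iff]
  have hmap : Ideal.span {a} = (Ideal.span {C a}).map (constantCoeff (R := O)) := by
    rw [Ideal.map_span, Set.image_singleton, constantCoeff_C]
  rw [hmap, Ideal.comap_map_of_surjective _ fun b => ⟨C b, constantCoeff_C b⟩, hker,
    Ideal.span_insert, sup_comm]

end PowerSeries

theorem maximalIdeal_mod_uniformizer_general
    (O : Type*) [CommRing O] [IsDomain O] [IsDiscreteValuationRing O]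
    (ϖ : O) (hϖ : Irreducible ϖ)
    (I : Ideal (PowerSeries O)) (hI : I = Ideal.span {C ϖ}) :
    Nonempty
      ((IsLocalRing.maximalIdeal (PowerSeries O) ⧸
          (I • ⊤ : Submodule (PowerSeries O)
            (IsLocalRing.maximalIdeal (PowerSeries O))))
        ≃ₗ[PowerSeries O]
       ((PowerSeries O ⧸ I) × IsLocalRing.ResidueField (PowerSeries O))) := by
  subst hI
  have hB : IsLocalRing.maximalIdeal O⟦X⟧ = Ideal.span {X, C ϖ} := by
    rw [maximalIdeal_eq_comap_constantCoeff, hϖ.maximalIdeal_eq,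
      comap_constantCoeff_span_singleton]
  have hϖ_reg : IsSMulRegular O ϖ := fun _ _ h => mul_left_cancel₀ hϖ.ne_zero h
  have e := Ideal.quotientSpanSingletonSMulTopEquiv (R := O⟦X⟧) (x := X) (y := C ϖ)
    isSMulRegular_X (isSMulRegular_C_quotient_span_X hϖ_reg)
  rw [← hB] at e
  exact ⟨e⟩

/-- Let Λ = O[[X]] and let B ⊂ Λ be the maximal ideal of Λ.  Then
B/ϖB ≅ Ω ⊕ κ as Ω = Λ/(ϖ)-modules, where κ is the residue field of O.  (The
isomorphism is stated Λ-linearly; all modules are Λ-modules killed by ϖ, so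
this is equivalent to Ω-linearity.) -/
theorem maximalIdeal_mod_uniformizer
    (O : Type*) [CommRing O] [IsDomain O] [IsDiscreteValuationRing O]
    [IsAdicComplete (IsLocalRing.maximalIdeal O) O]
    (ϖ : O) (hϖ : Irreducible ϖ)
    (I : Ideal (PowerSeries O)) (hI : I = Ideal.span {C ϖ}) :
    Nonempty
      ((IsLocalRing.maximalIdeal (PowerSeries O) ⧸
          (I • ⊤ : Submodule (PowerSeries O)
            (IsLocalRing.maximalIdeal (PowerSeries O))))
        ≃ₗ[PowerSeries O]
       ((PowerSeries O ⧸ I) × IsLocalRing.ResidueField (PowerSeries O))) :=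
  maximalIdeal_mod_uniformizer_general O ϖ hϖ I hI
end

section
/- Let Λ = O[[X]], B the maximal ideal of Λ, and A = Λ ⊕ O. Then A/ϖA ≅ B/ϖB as Ω = Λ/(ϖ)-modules, both have Λ-rank 1, μ(A) = μ(B) = 0, neither has a nonzero finite Λ-submodule, yet λ(A) = 1 ≠ 0 = λ(B). -/
/-!
Reduced mod `ϖ`, both modules become `Λ/(ϖ) × Λ/(ϖ, X)`.  For `A = Λ × Λ/(X)` this is immediate.
The ideal `B = (ϖ, X)` has the presentation `Λ² → B`, `(a, b) ↦ ϖ a + X b`, whose kernel is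
generated by `(X, -ϖ)` because `X` is prime and does not divide `ϖ`; modulo `ϖ Λ²` this generator
may be replaced by `(X, 0)`, which splits the quotient as `Λ/(ϖ, X) × Λ/(ϖ)`.

The invariants differ because the torsion of `A` is the summand `Λ/(X) ≅ O`, of `O`-rank one,
whereas `B` is an ideal of the domain `Λ`, hence torsion-free.  Neither module has a nonzero finite
submodule since the infinite domain `O` acts on both without torsion.
-/

open PowerSeries

universe u

def RestrictScalars.linearEquivOfIsScalarTower (R : Type*) {S M N : Type*} [CommSemiring R]
    [Semiring S] [Algebra R S] [AddCommMonoid M] [Module S M] [AddCommMonoid N] [Module S N]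
    [Module R N] [IsScalarTower R S N] (e : M ≃ₗ[S] N) : RestrictScalars R S M ≃ₗ[R] N where
  __ := (RestrictScalars.addEquiv R S M).trans e.toAddEquiv
  map_smul' c x := by simp [RestrictScalars.addEquiv_map_smul]

instance (priority := 100) IsDiscreteValuationRing.infinite (R : Type*) [CommRing R] [IsDomain R]
    [IsDiscreteValuationRing R] : Infinite R :=
  not_finite_iff_infinite.mp fun _ ↦ not_isField R (Finite.isField_of_domain R)

namespace Submodule

variable {R M N : Type*} [CommRing R] [AddCommGroup M] [Module R M] [AddCommGroup N] [Module R N]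

theorem smul_top_prod (I : Ideal R) :
    (I • ⊤ : Submodule R (M × N)) = (I • ⊤ : Submodule R M).prod (I • ⊤ : Submodule R N) := by
  refine le_antisymm (smul_le.mpr fun r hr x _ ↦
    mem_prod.mpr ⟨smul_mem_smul hr mem_top, smul_mem_smul hr mem_top⟩) ?_
  rintro ⟨a, b⟩ ⟨ha, hb⟩
  have hinl : (I • ⊤ : Submodule R M).map (LinearMap.inl R M N) ≤ I • ⊤ := by
    rw [map_smul'']; exact smul_mono_right _ le_top
  have hinr : (I • ⊤ : Submodule R N).map (LinearMap.inr R M N) ≤ I • ⊤ := by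
    rw [map_smul'']; exact smul_mono_right _ le_top
  rw [← Prod.fst_add_snd (a, b)]
  exact add_mem (hinl (mem_map_of_mem ha)) (hinr (mem_map_of_mem hb))

theorem span_singleton_inl (x : M) : (R ∙ ((x, 0) : M × N)) = (R ∙ x).prod ⊥ := by
  rw [← map_inl, map_span, Set.image_singleton, LinearMap.inl_apply]

theorem sup_span_singleton_eq_of_sub_mem {x y : M} {p : Submodule R M} (h : x - y ∈ p) :
    p ⊔ (R ∙ x) = p ⊔ (R ∙ y) := by
  have key : ∀ {x y : M}, x - y ∈ p → p ⊔ (R ∙ x) ≤ p ⊔ (R ∙ y) := fun {x y} h ↦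
    sup_le le_sup_left <| (span_singleton_le_iff_mem _ _).mpr <| by
      simpa using add_mem (mem_sup_left h) (mem_sup_right (mem_span_singleton_self y))
  exact le_antisymm (key h) (key (by simpa using neg_mem h))

noncomputable def quotientProdEquiv (p : Submodule R M) (q : Submodule R N) :
    ((M × N) ⧸ p.prod q) ≃ₗ[R] (M ⧸ p) × (N ⧸ q) :=
  (quotEquivOfEq _ _ (by rw [LinearMap.ker_prodMap, ker_mkQ, ker_mkQ])).trans
    ((p.mkQ.prodMap q.mkQ).quotKerEquivOfSurjective
      (p.mkQ_surjective.prodMap q.mkQ_surjective))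

noncomputable def quotientSMulTopEquiv (I : Ideal R) (e : M ≃ₗ[R] N) :
    (M ⧸ (I • ⊤ : Submodule R M)) ≃ₗ[R] N ⧸ (I • ⊤ : Submodule R N) :=
  Quotient.equiv _ _ e (by rw [map_smul'', map_top, LinearEquiv.range])

noncomputable def quotientSMulTopEquivOfSurjective (I : Ideal R) {f : M →ₗ[R] N}
    (hf : Function.Surjective f) :
    (N ⧸ (I • ⊤ : Submodule R N)) ≃ₗ[R] M ⧸ (I • ⊤ ⊔ LinearMap.ker f) :=
  ((mkQ (I • ⊤) ∘ₗ f).quotKerEquivOfSurjective ((mkQ_surjective _).comp hf)).symm.trans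
    (quotEquivOfEq _ _ (by rw [LinearMap.ker_comp, ker_mkQ, comap_smul_top_of_surjective I f hf]))

theorem torsion_prod : torsion R (M × N) = (torsion R M).prod (torsion R N) := by
  ext ⟨x, y⟩
  simp only [mem_prod, mem_torsion_iff, Submonoid.smul_def, Prod.smul_mk, Prod.mk_eq_zero]
  refine ⟨fun ⟨a, hx, hy⟩ ↦ ⟨⟨a, hx⟩, ⟨a, hy⟩⟩, fun ⟨⟨a, hx⟩, ⟨b, hy⟩⟩ ↦ ⟨a * b, ?_, ?_⟩⟩
  · rw [Submonoid.coe_mul, mul_comm, mul_smul, hx, smul_zero]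
  · rw [Submonoid.coe_mul, mul_smul, hy, smul_zero]

theorem map_torsion (e : M ≃ₗ[R] N) : (torsion R M).map (e : M →ₗ[R] N) = torsion R N := by
  ext y
  rw [map_equiv_eq_comap_symm, mem_comap, mem_torsion_iff, mem_torsion_iff]
  simp only [Submonoid.smul_def, LinearEquiv.coe_coe, ← map_smul, LinearEquiv.map_eq_zero_iff]

section IsDomain

variable [IsDomain R]

theorem torsion_prod_eq_range_inr [Module.IsTorsionFree R M] (hN : Module.IsTorsion R N) :
    torsion R (M × N) = LinearMap.range (LinearMap.inr R M N) := by
  have hN' : torsion R N = ⊤ := (isTorsion'_iff_torsion'_eq_top _).mp hN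
  rw [torsion_prod, isTorsionFree_iff_torsion_eq_bot.mp inferInstance, hN', LinearMap.range_inr]
  ext; simp

noncomputable def torsionEquivOfLinearEquivProd {F T : Type*} [AddCommGroup F] [Module R F]
    [AddCommGroup T] [Module R T] [Module.IsTorsionFree R F] (hT : Module.IsTorsion R T)
    (e : M ≃ₗ[R] F × T) : torsion R M ≃ₗ[R] T :=
  (e.submoduleMap (torsion R M)).trans <|
    (LinearEquiv.ofEq _ _ ((map_torsion e).trans (torsion_prod_eq_range_inr hT))).trans
      (LinearEquiv.ofInjective _ LinearMap.inr_injective).symm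

end IsDomain

end Submodule

theorem Submodule.eq_bot_of_finite_of_injective {R S M N : Type*} [CommRing R] [IsDomain R]
    [Infinite R] [CommRing S] [Algebra R S] [AddCommGroup M] [Module S M] [AddCommGroup N]
    [Module S N] [Module R N] [IsScalarTower R S N] [Module.IsTorsionFree R N]
    {f : M →ₗ[S] N} (hf : Function.Injective f) (P : Submodule S M) [Finite P] : P = ⊥ := by
  refine (Submodule.eq_bot_iff P).mpr fun x hx ↦ by_contra fun hx0 ↦ ?_
  have hfx : f x ≠ 0 := (map_ne_zero_iff f hf).mpr hx0
  have hinj : Function.Injective fun r : R ↦ (⟨algebraMap R S r • x, P.smul_mem _ hx⟩ : P) :=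
    fun r s hrs ↦ smul_left_injective R hfx <| by
      simpa [algebraMap_smul] using congrArg (f ∘ Subtype.val) hrs
  have := Finite.of_injective _ hinj
  exact not_finite R

section Rank

variable {R : Type u} [CommRing R]

theorem rank_prod_eq_add [HasRankNullity.{u} R] {M N : Type u} [AddCommGroup M] [Module R M]
    [AddCommGroup N] [Module R N] :
    Module.rank R (M × N) = Module.rank R M + Module.rank R N := by
  rw [LinearMap.rank_eq_of_surjective (LinearMap.fst_surjective (R := R) (M := M) (M₂ := N)),
    LinearMap.ker_fst, rank_range_of_injective _ LinearMap.inr_injective]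

namespace Ideal

variable [IsDomain R] {I : Ideal R}

theorem isTorsion_quotient (hI : I ≠ ⊥) : Module.IsTorsion R (R ⧸ I) := by
  obtain ⟨a, ha, ha0⟩ := Submodule.exists_mem_ne_zero_of_ne_bot hI
  intro x
  obtain ⟨r, rfl⟩ := Quotient.mk_surjective x
  refine ⟨⟨a, mem_nonZeroDivisors_of_ne_zero ha0⟩, ?_⟩
  rw [Submonoid.smul_def, Algebra.smul_def, Quotient.algebraMap_eq, ← map_mul,
    Quotient.eq_zero_iff_mem]
  exact I.mul_mem_right r ha

theorem rank_quotient_eq_zero (hI : I ≠ ⊥) : Module.rank R (R ⧸ I) = 0 :=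
  rank_eq_zero_iff.mpr fun x ↦
    let ⟨a, ha⟩ := isTorsion_quotient hI (x := x)
    ⟨a, nonZeroDivisors.coe_ne_zero a, ha⟩

theorem rank_eq_one (hI : I ≠ ⊥) : Module.rank R I = 1 := by
  have := Submodule.rank_quotient_add_rank I
  rwa [rank_quotient_eq_zero hI, zero_add, Module.rank_self] at this

end Ideal

end Rank

section Presentation

variable {R : Type*} [CommRing R]

theorem LinearMap.range_coprod_toSpanSingleton (x y : R) :
    range ((toSpanSingleton R R x).coprod (toSpanSingleton R R y)) = Ideal.span {x, y} := by
  rw [range_coprod, ← span_singleton_eq_range, ← span_singleton_eq_range, Ideal.span_insert]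

theorem LinearMap.ker_coprod_toSpanSingleton [IsDomain R] {x y : R} (hx : Prime x)
    (hxy : ¬x ∣ y) :
    ker ((toSpanSingleton R R y).coprod (toSpanSingleton R R x)) = R ∙ (x, -y) := by
  ext ⟨a, b⟩
  simp only [mem_ker, coprod_apply, toSpanSingleton_apply, smul_eq_mul,
    Submodule.mem_span_singleton, Prod.smul_mk, Prod.mk.injEq]
  constructor
  · intro h
    have hxa : x ∣ a * y := ⟨-b, by linear_combination h⟩
    obtain ⟨c, rfl⟩ := (hx.dvd_or_dvd hxa).resolve_right hxy
    have hb : x * (c * y + b) = 0 := by linear_combination h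
    refine ⟨c, mul_comm c x, ?_⟩
    linear_combination -((mul_eq_zero.mp hb).resolve_left hx.ne_zero)
  · rintro ⟨c, rfl, rfl⟩
    ring

noncomputable def prodQuotSpanSingletonQuotSMulTopEquiv (I : Ideal R) (x : R) :
    ((R × (R ⧸ Ideal.span {x})) ⧸ (I • ⊤ : Submodule R (R × (R ⧸ Ideal.span {x}))))
      ≃ₗ[R] (R ⧸ I) × (R ⧸ (I ⊔ Ideal.span {x})) :=
  let g := (LinearMap.id : R →ₗ[R] R).prodMap (Ideal.span {x}).mkQ
  (Submodule.quotientSMulTopEquivOfSurjective I (f := g)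
      (Function.surjective_id.prodMap (Submodule.mkQ_surjective _))).trans
    ((Submodule.quotEquivOfEq _ _ (by
      rw [Submodule.smul_top_prod, smul_eq_mul, Ideal.mul_top, LinearMap.ker_prodMap,
        LinearMap.ker_id, Submodule.ker_mkQ, Submodule.prod_sup_prod, sup_bot_eq])).trans
      (Submodule.quotientProdEquiv _ _))

noncomputable def spanPairQuotSMulTopEquiv [IsDomain R] (I : Ideal R) {x y : R} (hx : Prime x)
    (hxy : ¬x ∣ y) (hy : y ∈ I) :
    (Ideal.span {y, x} ⧸ (I • ⊤ : Submodule R (Ideal.span {y, x})))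
      ≃ₗ[R] (R ⧸ (I ⊔ Ideal.span {x})) × (R ⧸ I) :=
  let f := (LinearMap.toSpanSingleton R R y).coprod (LinearMap.toSpanSingleton R R x)
  (Submodule.quotientSMulTopEquiv I
      (LinearEquiv.ofEq _ _ (LinearMap.range_coprod_toSpanSingleton y x)).symm).trans
    ((Submodule.quotientSMulTopEquivOfSurjective I f.surjective_rangeRestrict).trans
      ((Submodule.quotEquivOfEq _ _ (by
        rw [LinearMap.ker_rangeRestrict, LinearMap.ker_coprod_toSpanSingleton hx hxy,
          Submodule.smul_top_prod, smul_eq_mul, Ideal.mul_top,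
          Submodule.sup_span_singleton_eq_of_sub_mem (y := (x, 0))
            (by simpa using I.neg_mem hy), Submodule.span_singleton_inl,
          Submodule.prod_sup_prod, sup_bot_eq])).trans
        (Submodule.quotientProdEquiv _ _)))

end Presentation

namespace PowerSeries

variable {O : Type*} [CommRing O]

theorem maximalIdeal_eq_span_C_X [IsLocalRing O] {ϖ : O}
    (hϖ : IsLocalRing.maximalIdeal O = Ideal.span {ϖ}) :
    IsLocalRing.maximalIdeal O⟦X⟧ = Ideal.span {C ϖ, X} := by
  ext f
  rw [IsLocalRing.mem_maximalIdeal, mem_nonunits_iff, isUnit_iff_constantCoeff,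
    ← mem_nonunits_iff, ← IsLocalRing.mem_maximalIdeal, hϖ, Ideal.mem_span_singleton,
    Ideal.mem_span_pair]
  constructor
  · rintro ⟨u, hu⟩
    obtain ⟨g, hg⟩ : X ∣ f - C (constantCoeff f) := X_dvd_iff.mpr (by simp)
    exact ⟨C u, g, by rw [← map_mul, mul_comm u, ← hu]; linear_combination -hg⟩
  · rintro ⟨a, b, rfl⟩
    exact ⟨constantCoeff a, by simp [mul_comm]⟩

theorem algebraMap_quotient_span_X_bijective :
    Function.Bijective (algebraMap O (O⟦X⟧ ⧸ Ideal.span {(X : O⟦X⟧)})) := by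
  have hmk (a : O) :
      algebraMap O (O⟦X⟧ ⧸ Ideal.span {(X : O⟦X⟧)}) a = Ideal.Quotient.mk _ (C a) := rfl
  refine ⟨fun a b h ↦ ?_, fun y ↦ ?_⟩
  · rw [hmk, hmk, Ideal.Quotient.eq, Ideal.mem_span_singleton, X_dvd_iff] at h
    simpa [sub_eq_zero] using h
  · obtain ⟨f, rfl⟩ := Ideal.Quotient.mk_surjective y
    refine ⟨constantCoeff f, ?_⟩
    rw [hmk, Ideal.Quotient.eq, Ideal.mem_span_singleton, X_dvd_iff]
    simp

noncomputable def quotientSpanXAlgEquiv : (O⟦X⟧ ⧸ Ideal.span {(X : O⟦X⟧)}) ≃ₐ[O] O :=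
  (AlgEquiv.ofBijective (Algebra.ofId O _) algebraMap_quotient_span_X_bijective).symm

instance [IsDomain O] : Module.IsTorsionFree O O⟦X⟧ :=
  Module.isTorsionFree_iff_algebraMap_injective.mpr C_injective

instance [IsDomain O] : Module.IsTorsionFree O (O⟦X⟧ ⧸ Ideal.span {(X : O⟦X⟧)}) :=
  (quotientSpanXAlgEquiv (O := O)).injective.moduleIsTorsionFree _ (map_smul _)

end PowerSeries

theorem example_lambda_differs_general
    (O : Type*) [CommRing O] [IsDomain O] [IsDiscreteValuationRing O]
    (ϖ : O) (hϖ : Irreducible ϖ)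
    (I : Ideal (PowerSeries O)) (hI : I = Ideal.span {C ϖ})
    (A : Type*) [AddCommGroup A] [Module (PowerSeries O) A]
    (hA : Nonempty (A ≃ₗ[PowerSeries O]
      (PowerSeries O × (PowerSeries O ⧸ Ideal.span {(X : PowerSeries O)}))))
    (B : Type*) [AddCommGroup B] [Module (PowerSeries O) B]
    (hB : Nonempty (B ≃ₗ[PowerSeries O]
      (IsLocalRing.maximalIdeal (PowerSeries O) : Submodule (PowerSeries O)
        (PowerSeries O)))) :
    -- A/ϖA ≅ B/ϖB as Ω-modules
    Nonempty ((A ⧸ (I • ⊤ : Submodule (PowerSeries O) A)) ≃ₗ[PowerSeries O]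
      (B ⧸ (I • ⊤ : Submodule (PowerSeries O) B))) ∧
    -- both have Λ-rank one
    Module.rank (PowerSeries O) A = 1 ∧ Module.rank (PowerSeries O) B = 1 ∧
    -- μ(A) = μ(B) = 0
    Module.Finite O
      (RestrictScalars O (PowerSeries O) (Submodule.torsion (PowerSeries O) A)) ∧
    Module.Finite O
      (RestrictScalars O (PowerSeries O) (Submodule.torsion (PowerSeries O) B)) ∧
    -- no nonzero finite Λ-submodules
    (∀ N : Submodule (PowerSeries O) A, Finite N → N = ⊥) ∧
    (∀ N : Submodule (PowerSeries O) B, Finite N → N = ⊥) ∧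
    -- λ(A) = 1 but λ(B) = 0
    Module.finrank O
      (RestrictScalars O (PowerSeries O) (Submodule.torsion (PowerSeries O) A)) = 1 ∧
    Module.finrank O
      (RestrictScalars O (PowerSeries O) (Submodule.torsion (PowerSeries O) B)) = 0 := by
  obtain ⟨eA⟩ := hA
  obtain ⟨eB⟩ := hB
  have hX : Ideal.span {(X : O⟦X⟧)} ≠ ⊥ := by simp
  have hXϖ : ¬(X : O⟦X⟧) ∣ C ϖ := by rw [X_dvd_iff, constantCoeff_C]; exact hϖ.ne_zero
  have h𝔪 : Ideal.span {C ϖ, X} ≠ ⊥ :=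
    (Submodule.ne_bot_iff _).mpr ⟨X, Ideal.subset_span (by simp), X_ne_zero⟩
  let eB' := eB.trans (LinearEquiv.ofEq _ _ (maximalIdeal_eq_span_C_X hϖ.maximalIdeal_eq))
  have hB_incl : Function.Injective ((Ideal.span {C ϖ, X}).subtype ∘ₗ eB'.toLinearMap) :=
    Subtype.val_injective.comp eB'.injective
  let eTorsionA := (RestrictScalars.linearEquivOfIsScalarTower O
    (Submodule.torsionEquivOfLinearEquivProd (Ideal.isTorsion_quotient hX) eA)).trans
      quotientSpanXAlgEquiv.toLinearEquiv
  have hB_free : Module.IsTorsionFree O⟦X⟧ B := hB_incl.moduleIsTorsionFree _ (by simp)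
  have hB_torsion : Subsingleton (RestrictScalars O O⟦X⟧ (Submodule.torsion O⟦X⟧ B)) := by
    rw [RestrictScalars, Submodule.isTorsionFree_iff_torsion_eq_bot.mp hB_free]; infer_instance
  refine ⟨⟨?_⟩, ?_, ?_, .equiv eTorsionA.symm, inferInstance,
    fun N _ ↦ Submodule.eq_bot_of_finite_of_injective (R := O) eA.injective N,
    fun N _ ↦ Submodule.eq_bot_of_finite_of_injective (R := O) hB_incl N,
    by rw [eTorsionA.finrank_eq, Module.finrank_self], Module.finrank_zero_of_subsingleton⟩
  · subst hI
    exact (Submodule.quotientSMulTopEquiv _ eA).trans <|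
      (prodQuotSpanSingletonQuotSMulTopEquiv _ X).trans <| (LinearEquiv.prodComm _ _ _).trans <|
        ((Submodule.quotientSMulTopEquiv _ eB').trans <|
          spanPairQuotSMulTopEquiv _ X_prime hXϖ (Ideal.mem_span_singleton_self _)).symm
  · rw [← Cardinal.lift_eq_one, eA.lift_rank_eq, rank_prod_eq_add, Module.rank_self,
      Ideal.rank_quotient_eq_zero hX, add_zero, Cardinal.lift_one]
  · rw [← Cardinal.lift_eq_one, eB'.lift_rank_eq, Ideal.rank_eq_one h𝔪, Cardinal.lift_one]

/-- Example 3.4 of the paper: Let Λ = O[[X]], B the maximal ideal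
of Λ, and A = Λ ⊕ O (realized as Λ × Λ/(X)).  Then A/ϖA ≅ B/ϖB as
Ω = Λ/(ϖ)-modules, both have Λ-rank 1, μ(A) = μ(B) = 0, neither has a nonzero
finite Λ-submodule, yet λ(A) = 1 ≠ 0 = λ(B). -/
theorem example_lambda_differs
    (O : Type*) [CommRing O] [IsDomain O] [IsDiscreteValuationRing O]
    [IsAdicComplete (IsLocalRing.maximalIdeal O) O]
    [Finite (IsLocalRing.ResidueField O)]
    (ϖ : O) (hϖ : Irreducible ϖ)
    (I : Ideal (PowerSeries O)) (hI : I = Ideal.span {C ϖ})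
    (A : Type*) [AddCommGroup A] [Module (PowerSeries O) A]
    (hA : Nonempty (A ≃ₗ[PowerSeries O]
      (PowerSeries O × (PowerSeries O ⧸ Ideal.span {(X : PowerSeries O)}))))
    (B : Type*) [AddCommGroup B] [Module (PowerSeries O) B]
    (hB : Nonempty (B ≃ₗ[PowerSeries O]
      (IsLocalRing.maximalIdeal (PowerSeries O) : Submodule (PowerSeries O)
        (PowerSeries O)))) :
    -- A/ϖA ≅ B/ϖB as Ω-modules
    Nonempty ((A ⧸ (I • ⊤ : Submodule (PowerSeries O) A)) ≃ₗ[PowerSeries O]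
      (B ⧸ (I • ⊤ : Submodule (PowerSeries O) B))) ∧
    -- both have Λ-rank one
    Module.rank (PowerSeries O) A = 1 ∧ Module.rank (PowerSeries O) B = 1 ∧
    -- μ(A) = μ(B) = 0
    Module.Finite O
      (RestrictScalars O (PowerSeries O) (Submodule.torsion (PowerSeries O) A)) ∧
    Module.Finite O
      (RestrictScalars O (PowerSeries O) (Submodule.torsion (PowerSeries O) B)) ∧
    -- no nonzero finite Λ-submodules
    (∀ N : Submodule (PowerSeries O) A, Finite N → N = ⊥) ∧
    (∀ N : Submodule (PowerSeries O) B, Finite N → N = ⊥) ∧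
    -- λ(A) = 1 but λ(B) = 0
    Module.finrank O
      (RestrictScalars O (PowerSeries O) (Submodule.torsion (PowerSeries O) A)) = 1 ∧
    Module.finrank O
      (RestrictScalars O (PowerSeries O) (Submodule.torsion (PowerSeries O) B)) = 0 :=
  example_lambda_differs_general O ϖ hϖ I hI A hA B hB
end
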